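/- arXiv:2010.10643 — 2 statements merged into one kernel-verified Lean document; each statement's English description precedes it below -/
import Mathlib

section
/- If H and K are equal impartial games (H + K is a P-position), then G ∘ H and G ∘ K are equal, i.e., (G ∘ H) + (G ∘ K) is a P-position. -/
/-- Finite impartial games, given by their (finite list of) options. -/
inductive IGame : Type where
  | mk : List IGame → IGame

/-- The empty game `E`, with no options. -/
abbrev E : IGame := .mk []

/-- The list of options of a game. -/
def IGame.opts : IGame → List IGame
  | .mk l => l

theorem IGame.sizeOf_lt_of_mem {g : IGame} {l : List IGame} (h : g ∈ l) :
    sizeOf g < sizeOf (IGame.mk l) := by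
  have := List.sizeOf_lt_of_mem h
  simp only [IGame.mk.sizeOf_spec]; omega

/-- The pass operator: `E* = E`; for `G` with options, `G*` has options
`G` together with `g*` for each option `g` of `G`. -/
def pass : IGame → IGame
  | .mk [] => .mk []
  | .mk l => .mk (.mk l :: l.attach.map fun g => pass g.1)
decreasing_by
  exact IGame.sizeOf_lt_of_mem g.2

/-- The split sum `G ∘ H`. -/
def split : IGame → IGame → IGame
  | .mk [], _ => .mk []
  | .mk gs, .mk [] => .mk gs
  | .mk gs, .mk hs =>
      .mk ((hs.attach.map fun h => split (.mk gs) h.1) ++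
           (gs.attach.map fun g => split g.1 (.mk hs)))
termination_by G H => sizeOf G + sizeOf H
decreasing_by
  · have := IGame.sizeOf_lt_of_mem h.2; omega
  · have := IGame.sizeOf_lt_of_mem g.2; omega

/-- Disjunctive sum of games. -/
def addG : IGame → IGame → IGame
  | .mk gs, .mk hs =>
      .mk ((gs.attach.map fun g => addG g.1 (.mk hs)) ++
           (hs.attach.map fun h => addG (.mk gs) h.1))
termination_by G H => sizeOf G + sizeOf H
decreasing_by
  · have := IGame.sizeOf_lt_of_mem g.2; omega
  · have := IGame.sizeOf_lt_of_mem h.2; omega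

/-- The nimber `*n`, with options `*0, …, *(n-1)`. -/
def star : ℕ → IGame
  | n => .mk ((List.range n).attach.map fun k => star k.1)
termination_by n => n
decreasing_by have := List.mem_range.mp k.2; omega

/-- `G` is a P-position (previous player wins under normal play):
every option is an N-position. -/
def PPos : IGame → Prop
  | .mk l => ∀ g ∈ l.attach, ¬ PPos g.1
decreasing_by exact IGame.sizeOf_lt_of_mem g.2

/-- Identity of game trees (extensionally: same set of options, recursively). -/
def Ident : IGame → IGame → Prop
  | .mk gs, .mk hs =>
      (∀ g ∈ gs.attach, ∃ h ∈ hs.attach, Ident g.1 h.1) ∧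
      (∀ h ∈ hs.attach, ∃ g ∈ gs.attach, Ident g.1 h.1)
termination_by G H => sizeOf G + sizeOf H
decreasing_by
  · have := IGame.sizeOf_lt_of_mem g.2
    have := IGame.sizeOf_lt_of_mem h.2; omega
  · have := IGame.sizeOf_lt_of_mem g.2
    have := IGame.sizeOf_lt_of_mem h.2; omega

/-! By Sprague–Grundy, `X + Y` is a P-position iff `X` and `Y` have the same Grundy value, so it
suffices that the Grundy value of `G ∘ H` depends only on that of `H`. By induction, no option of
`G ∘ K` has the Grundy value of `G ∘ H`: an option `g ∘ K` has that of `g ∘ H`, itself an option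
of `G ∘ H`. For an option `G ∘ k`, either `k` has a smaller value than `H`, shared by an option `h`
of `H`, and `G ∘ k` has the value of the option `G ∘ h` of `G ∘ H`; or `k` has a larger one, so
some option `k'` of `k` has the value of `H`, and `G ∘ H` has the value of the option `G ∘ k'` of
`G ∘ k`. -/

theorem IGame.sizeOf_lt_of_mem_opts {x X : IGame} (h : x ∈ X.opts) : sizeOf x < sizeOf X := by
  cases X
  exact IGame.sizeOf_lt_of_mem h

theorem pPos_iff (X : IGame) : PPos X ↔ ∀ x ∈ X.opts, ¬ PPos x := by
  cases X
  rw [PPos]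
  simp [IGame.opts]

theorem opts_addG (X Y : IGame) :
    (addG X Y).opts = X.opts.map (addG · Y) ++ Y.opts.map (addG X ·) := by
  cases X; cases Y
  rw [addG]
  simp [IGame.opts]

theorem exists_not_mem_list (l : List ℕ) : ∃ n, n ∉ l := by
  simpa using Infinite.exists_notMem_finset l.toFinset

def mex (l : List ℕ) : ℕ := Nat.find (exists_not_mem_list l)

theorem mex_not_mem (l : List ℕ) : mex l ∉ l := Nat.find_spec (exists_not_mem_list l)

theorem mem_of_lt_mex {l : List ℕ} {n : ℕ} (h : n < mex l) : n ∈ l := by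
  simpa using Nat.find_min (exists_not_mem_list l) h

def grundy : IGame → ℕ
  | .mk l => mex (l.attach.map fun x => grundy x.1)
decreasing_by exact IGame.sizeOf_lt_of_mem x.2

theorem grundy_eq_mex (X : IGame) : grundy X = mex (X.opts.map grundy) := by
  cases X
  rw [grundy]
  simp [IGame.opts]

theorem grundy_ne_of_mem_opts {x X : IGame} (h : x ∈ X.opts) : grundy x ≠ grundy X := by
  rw [grundy_eq_mex X]
  intro he
  exact mex_not_mem _ (he ▸ List.mem_map_of_mem (f := grundy) h)

theorem exists_mem_opts_grundy_eq {X : IGame} {n : ℕ} (h : n < grundy X) :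
    ∃ x ∈ X.opts, grundy x = n := by
  rw [grundy_eq_mex] at h
  simpa using mem_of_lt_mex h

theorem grundy_eq_of_forall_ne {X Y : IGame} (hX : ∀ x ∈ X.opts, grundy x ≠ grundy Y)
    (hY : ∀ y ∈ Y.opts, grundy y ≠ grundy X) : grundy X = grundy Y := by
  rcases lt_trichotomy (grundy X) (grundy Y) with hlt | heq | hgt
  · obtain ⟨y, hy, hyX⟩ := exists_mem_opts_grundy_eq hlt
    exact absurd hyX (hY y hy)
  · exact heq
  · obtain ⟨x, hx, hxY⟩ := exists_mem_opts_grundy_eq hgt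
    exact absurd hxY (hX x hx)

theorem pPos_addG_iff (X Y : IGame) : PPos (addG X Y) ↔ grundy X = grundy Y := by
  rw [pPos_iff, opts_addG]
  simp only [List.mem_append, List.mem_map]
  constructor
  · intro hP
    by_contra hne
    rcases lt_or_gt_of_ne hne with hlt | hgt
    · obtain ⟨y, hy, hyX⟩ := exists_mem_opts_grundy_eq hlt
      exact hP _ (.inr ⟨y, hy, rfl⟩) ((pPos_addG_iff X y).2 hyX.symm)
    · obtain ⟨x, hx, hxY⟩ := exists_mem_opts_grundy_eq hgt
      exact hP _ (.inl ⟨x, hx, rfl⟩) ((pPos_addG_iff x Y).2 hxY)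
  · rintro hXY _ (⟨x, hx, rfl⟩ | ⟨y, hy, rfl⟩) hP
    · exact grundy_ne_of_mem_opts hx (((pPos_addG_iff x Y).1 hP).trans hXY.symm)
    · exact grundy_ne_of_mem_opts hy (((pPos_addG_iff X y).1 hP).symm.trans hXY)
termination_by sizeOf X + sizeOf Y
decreasing_by
  all_goals first
    | (have := IGame.sizeOf_lt_of_mem_opts hx; omega)
    | (have := IGame.sizeOf_lt_of_mem_opts hy; omega)

theorem split_empty_right (G : IGame) : split G E = G := by
  rcases G with ⟨_ | _⟩ <;> simp [split]

theorem opts_split {G : IGame} (hG : G.opts ≠ []) (H : IGame) :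
    (split G H).opts = H.opts.map (split G) ++ G.opts.map (split · H) := by
  rcases G with ⟨_ | ⟨g, gs⟩⟩
  · exact absurd rfl hG
  rcases H with ⟨_ | ⟨h, hs⟩⟩
  · simp [split_empty_right, IGame.opts]
  · rw [split] <;> simp [IGame.opts]

theorem split_mem_opts_split_left {G : IGame} (hG : G.opts ≠ []) {h H : IGame}
    (hh : h ∈ H.opts) : split G h ∈ (split G H).opts := by
  rw [opts_split hG]
  exact List.mem_append_left _ (List.mem_map_of_mem hh)

theorem split_mem_opts_split_right {G : IGame} (hG : G.opts ≠ []) {g H : IGame}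
    (hg : g ∈ G.opts) : split g H ∈ (split G H).opts := by
  rw [opts_split hG]
  exact List.mem_append_right _ (List.mem_map_of_mem (f := (split · H)) hg)

theorem grundy_split_ne_of_mem_opts {G : IGame} (hG : G.opts ≠ []) {H K : IGame}
    (hHK : grundy H = grundy K)
    (ih : ∀ G' H' K', sizeOf G' + sizeOf H' + sizeOf K' < sizeOf G + sizeOf H + sizeOf K →
      grundy H' = grundy K' → grundy (split G' H') = grundy (split G' K')) :
    ∀ y ∈ (split G K).opts, grundy y ≠ grundy (split G H) := by
  rw [opts_split hG]
  simp only [List.mem_append, List.mem_map]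
  rintro _ (⟨k, hk, rfl⟩ | ⟨g, hg, rfl⟩)
  · have hkK := grundy_ne_of_mem_opts hk
    have := IGame.sizeOf_lt_of_mem_opts hk
    rcases lt_or_gt_of_ne (hHK ▸ hkK) with hlt | hgt
    · obtain ⟨h, hh, hhk⟩ := exists_mem_opts_grundy_eq hlt
      have := IGame.sizeOf_lt_of_mem_opts hh
      rw [← ih G h k (by omega) hhk]
      exact grundy_ne_of_mem_opts (split_mem_opts_split_left hG hh)
    · obtain ⟨k', hk', hk'H⟩ := exists_mem_opts_grundy_eq hgt
      have := IGame.sizeOf_lt_of_mem_opts hk'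
      rw [← ih G k' H (by omega) hk'H]
      exact (grundy_ne_of_mem_opts (split_mem_opts_split_left hG hk')).symm
  · have := IGame.sizeOf_lt_of_mem_opts hg
    rw [← ih g H K (by omega) hHK]
    exact grundy_ne_of_mem_opts (split_mem_opts_split_right hG hg)

theorem grundy_split_congr_right (G H K : IGame) (hHK : grundy H = grundy K) :
    grundy (split G H) = grundy (split G K) := by
  rcases G with ⟨_ | ⟨g, gs⟩⟩
  · simp only [split]
  have hG : (IGame.mk (g :: gs)).opts ≠ [] := List.cons_ne_nil g gs
  refine grundy_eq_of_forall_ne ?_ ?_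
  · refine grundy_split_ne_of_mem_opts hG hHK.symm fun G' H' K' hlt => ?_
    exact grundy_split_congr_right G' H' K'
  · refine grundy_split_ne_of_mem_opts hG hHK fun G' H' K' hlt => ?_
    exact grundy_split_congr_right G' H' K'
termination_by sizeOf G + sizeOf H + sizeOf K
decreasing_by all_goals omega

/-- if `H = K` (i.e. `H + K` is a P-position) then
`G ∘ H = G ∘ K` (i.e. `(G ∘ H) + (G ∘ K)` is a P-position). -/
theorem split_congr_right (G H K : IGame) (h : PPos (addG H K)) :
    PPos (addG (split G H) (split G K)) :=
  (pPos_addG_iff _ _).2 (grundy_split_congr_right G H K ((pPos_addG_iff H K).1 h))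
end

section
/- For a single pile of Nim with a pass: if n is odd, the Grundy value of (n)* is n + 1; if n is even and n > 0, the Grundy value of (n)* is n − 1; and the Grundy value of (0)* is 0. -/
/-! Writing `G = *m` for "`G + *m` is a P-position", a game equals `*m` as soon as no option
equals `*m` and `G + *j` is an N-position for every `j < m` (the mex rule). The options of `(n)*`
are `*n` and the `(k)*` with `k < n`, so by strong induction `(n)* = *f(n)`, where `f` fixes `0`
and swaps `2i - 1` and `2i`: the values `f(k)` for `k < n`, together with `n`, cover every number
below `f(n)` and miss `f(n)` itself. -/

theorem ppos_iff_forall_opts (G : IGame) : PPos G ↔ ∀ g ∈ G.opts, ¬PPos g := by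
  cases G with
  | mk l => rw [PPos]; simp [IGame.opts]

theorem opts_addG_s12 (G H : IGame) :
    (addG G H).opts = G.opts.map (addG · H) ++ H.opts.map (addG G ·) := by
  cases G; cases H
  rw [addG]; simp [IGame.opts]

theorem opts_star (n : ℕ) : (_root_.star n).opts = (List.range n).map _root_.star := by
  rw [_root_.star]; simp [IGame.opts]

theorem opts_pass_of_ne_nil {G : IGame} (h : G.opts ≠ []) :
    (pass G).opts = G :: G.opts.map pass := by
  obtain ⟨_ | ⟨g, l⟩⟩ := G
  · exact absurd rfl h
  · rw [_root_.pass]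
    · simp [IGame.opts]
    · simp

theorem pass_star_zero : pass (_root_.star 0) = _root_.star 0 := by
  have : _root_.star 0 = .mk [] := by rw [_root_.star]; rfl
  rw [this, _root_.pass]

theorem opts_pass_star {n : ℕ} (hn : 0 < n) :
    (pass (_root_.star n)).opts =
      _root_.star n :: (List.range n).map (_root_.pass ∘ _root_.star) := by
  rw [opts_pass_of_ne_nil (by simp [opts_star, hn.ne']), opts_star, List.map_map]

def HasGrundyValue (G : IGame) (m : ℕ) : Prop :=
  PPos (addG G (star m))

theorem hasGrundyValue_iff (G : IGame) (m : ℕ) :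
    HasGrundyValue G m ↔
      (∀ g ∈ G.opts, ¬HasGrundyValue g m) ∧ ∀ j < m, ¬HasGrundyValue G j := by
  rw [HasGrundyValue, ppos_iff_forall_opts, opts_addG_s12, List.forall_mem_append, List.forall_mem_map,
    opts_star, List.forall_mem_map]
  simp [HasGrundyValue]

theorem not_hasGrundyValue_of_mem {G g : IGame} {m : ℕ} (hg : g ∈ G.opts)
    (h : HasGrundyValue g m) : ¬HasGrundyValue G m :=
  fun hG => ((hasGrundyValue_iff G m).1 hG).1 g hg h

theorem not_hasGrundyValue_of_lt {G : IGame} {a b : ℕ} (h : HasGrundyValue G a) (hab : a < b) :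
    ¬HasGrundyValue G b :=
  fun hG => ((hasGrundyValue_iff G b).1 hG).2 a hab h

theorem HasGrundyValue.unique {G : IGame} {a b : ℕ} (ha : HasGrundyValue G a)
    (hb : HasGrundyValue G b) : a = b := by
  by_contra hne
  rcases Nat.lt_or_gt_of_ne hne with hab | hba
  · exact not_hasGrundyValue_of_lt ha hab hb
  · exact not_hasGrundyValue_of_lt hb hba ha

theorem hasGrundyValue_star (n : ℕ) : HasGrundyValue (star n) n := by
  induction n using Nat.strong_induction_on with
  | _ n ih =>
    rw [hasGrundyValue_iff, opts_star]
    refine ⟨fun g hg => ?_, fun j hj => ?_⟩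
    · obtain ⟨k, hk, rfl⟩ := List.mem_map.1 hg
      exact not_hasGrundyValue_of_lt (ih k (List.mem_range.1 hk)) (List.mem_range.1 hk)
    · exact not_hasGrundyValue_of_mem
        (by rw [opts_star]; exact List.mem_map_of_mem (List.mem_range.2 hj)) (ih j hj)

theorem hasGrundyValue_star_iff {a b : ℕ} : HasGrundyValue (star a) b ↔ a = b :=
  ⟨(hasGrundyValue_star a).unique, by rintro rfl; exact hasGrundyValue_star a⟩

def passGrundy (n : ℕ) : ℕ := if Odd n then n + 1 else n - 1

theorem passGrundy_involutive : Function.Involutive passGrundy := by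
  intro n
  simp only [passGrundy, Nat.odd_iff]
  split_ifs <;> omega

theorem passGrundy_ne_self {n : ℕ} (hn : 0 < n) : passGrundy n ≠ n := by
  simp only [passGrundy, Nat.odd_iff]
  split_ifs <;> omega

theorem passGrundy_pos {n : ℕ} (hn : 0 < n) : 0 < passGrundy n := by
  simp only [passGrundy, Nat.odd_iff]
  split_ifs <;> omega

theorem eq_passGrundy_of_lt_of_passGrundy_lt {k n : ℕ} (hk : k < n)
    (h : passGrundy n < passGrundy k) : k = passGrundy n := by
  simp only [passGrundy, Nat.odd_iff] at h ⊢
  split_ifs at h ⊢ <;> omega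

theorem passGrundy_lt_of_lt_passGrundy {j n : ℕ} (hj : j < passGrundy n) (hjn : j ≠ n) :
    passGrundy j < n := by
  simp only [passGrundy, Nat.odd_iff] at hj ⊢
  split_ifs at hj ⊢ <;> omega

theorem hasGrundyValue_pass_star (n : ℕ) : HasGrundyValue (pass (star n)) (passGrundy n) := by
  induction n using Nat.strong_induction_on with
  | _ n ih =>
    rcases n.eq_zero_or_pos with rfl | hn
    · rw [pass_star_zero]; exact hasGrundyValue_star 0
    rw [hasGrundyValue_iff, opts_pass_star hn]
    refine ⟨fun g hg => ?_, fun j hj => ?_⟩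
    · obtain rfl | hg := List.mem_cons.1 hg
      · exact hasGrundyValue_star_iff.not.2 (passGrundy_ne_self hn).symm
      obtain ⟨k, hk, rfl⟩ := List.mem_map.1 hg
      rw [List.mem_range] at hk
      rcases lt_trichotomy (passGrundy k) (passGrundy n) with hlt | heq | hgt
      · exact not_hasGrundyValue_of_lt (ih k hk) hlt
      · exact absurd (passGrundy_involutive.injective heq) hk.ne
      · obtain rfl := eq_passGrundy_of_lt_of_passGrundy_lt hk hgt
        exact not_hasGrundyValue_of_mem (by simp [opts_pass_star (passGrundy_pos hn)])
          (hasGrundyValue_star _)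
    · rcases eq_or_ne j n with rfl | hjn
      · exact not_hasGrundyValue_of_mem (by simp [opts_pass_star hn]) (hasGrundyValue_star j)
      have hk := passGrundy_lt_of_lt_passGrundy hj hjn
      refine not_hasGrundyValue_of_mem (g := pass (star (passGrundy j))) ?_ ?_
      · rw [opts_pass_star hn]
        exact List.mem_cons_of_mem _ (List.mem_map_of_mem (List.mem_range.2 hk))
      simpa only [passGrundy_involutive j] using ih _ hk

/-- Grundy values of one-pile Nim with a pass: `(n)*` has Grundy
value `n+1` for odd `n`, `n-1` for even `n > 0`, and `(0)*` has Grundy value `0`. -/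
theorem grundy_one_pile_pass (n : ℕ) :
    (Odd n → PPos (addG (pass (star n)) (star (n + 1)))) ∧
    (Even n → 0 < n → PPos (addG (pass (star n)) (star (n - 1)))) ∧
    PPos (addG (pass (star 0)) (star 0)) := by
  have key := hasGrundyValue_pass_star n
  refine ⟨fun hodd => ?_, fun heven _ => ?_, hasGrundyValue_pass_star 0⟩
  · rwa [passGrundy, if_pos hodd] at key
  · rwa [passGrundy, if_neg (Nat.not_odd_iff_even.2 heven)] at key
end
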